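/- The almost contact structure (φ, ξ, η) on 𝒬³_α is normal: for all smooth vector fields X, Y on {(x,y,z) ∈ ℝ³ : x > 0}, N_φ(X,Y) + (X(η(Y)) − Y(η(X)) − η([X,Y]))·ξ = 0 identically, where N_φ(X,Y) = [φX, φY] − φ[φX, Y] − φ[X, φY] + φ(φ([X,Y])). -/

import Mathlib

noncomputable section

/-- Points and tangent vectors of ℝ³, written as triples `(x, y, z)`. -/
abbrev R3 : Type := ℝ × ℝ × ℝ

/-- The underlying open set `{(x,y,z) : x > 0}` of `𝒬³_α`. -/
def U3 : Set R3 := {p : R3 | 0 < p.1}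

/-- The contact form `η` on `𝒬³_α` : `η_p(v) = −2x·v₂ + v₃`. -/
def etaQ (p v : R3) : ℝ := -2 * p.1 * v.2.1 + v.2.2

/-- The Reeb vector field `ξ = (0,0,1)`. -/
def xiQ : R3 := (0, 0, 1)

/-- The `(1,1)`-tensor field `φ` : `φ_p(v) = (−v₂, v₁, 2x·v₁)`. -/
def phiQ (p v : R3) : R3 := (-v.2.1, v.1, 2 * p.1 * v.1)

/-- The pseudo-metric `g_p(u,v) = x²(u₁v₁ + u₂v₂) + ε·η_p(u)·η_p(v)` on `𝒬³_α`. -/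
def gQ (ε : ℝ) (p u v : R3) : ℝ :=
  p.1 ^ 2 * (u.1 * v.1 + u.2.1 * v.2.1) + ε * etaQ p u * etaQ p v

/-- The Lie bracket `[X,Y] = DY·X − DX·Y` of vector fields. -/
def bracket (X Y : R3 → R3) : R3 → R3 := fun p => fderiv ℝ Y p (X p) - fderiv ℝ X p (Y p)

/-- The vector field `φX : p ↦ φ_p(X(p))`. -/
def phiVF (X : R3 → R3) : R3 → R3 := fun p => phiQ p (X p)

/-- The Nijenhuis torsion `N_φ(X,Y) = [φX, φY] − φ[φX, Y] − φ[X, φY] + φ(φ([X,Y]))`. -/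
def nijenhuisQ (X Y : R3 → R3) : R3 → R3 := fun p =>
  bracket (phiVF X) (phiVF Y) p - phiVF (bracket (phiVF X) Y) p
    - phiVF (bracket X (phiVF Y)) p + phiQ p (phiQ p (bracket X Y p))


lemma hasFDerivAt_phiVF (X : R3 → R3) (p : R3) (hX : DifferentiableAt ℝ X p) :
    ∃ L : R3 →L[ℝ] R3, HasFDerivAt (phiVF X) L p ∧
      ∀ w, L w = (-(fderiv ℝ X p w).2.1, (fderiv ℝ X p w).1,
        2 * w.1 * (X p).1 + 2 * p.1 * (fderiv ℝ X p w).1) := by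
  have hX' := hX.hasFDerivAt
  have hx1 : HasFDerivAt (fun q : R3 => q.1) (ContinuousLinearMap.fst ℝ ℝ (ℝ × ℝ)) p :=
    hasFDerivAt_fst
  have h1 := hX'.fst
  have h2 := hX'.snd.fst
  have hprod := ((hx1.const_mul (2:ℝ)).mul h1)
  have h := HasFDerivAt.prodMk (h2.neg) (HasFDerivAt.prodMk h1 hprod)
  refine ⟨_, h, fun w => ?_⟩
  simp [ContinuousLinearMap.comp_apply]
  ring

lemma fderiv_etaVF (Y : R3 → R3) (p : R3) (hY : DifferentiableAt ℝ Y p) (w : R3) :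
    fderiv ℝ (fun q => etaQ q (Y q)) p w
      = -2 * w.1 * (Y p).2.1 + (-2 * p.1 * (fderiv ℝ Y p w).2.1 + (fderiv ℝ Y p w).2.2) := by
  have hY' := hY.hasFDerivAt
  have hx1 : HasFDerivAt (fun q : R3 => q.1) (ContinuousLinearMap.fst ℝ ℝ (ℝ × ℝ)) p :=
    hasFDerivAt_fst
  have h : HasFDerivAt (fun q => etaQ q (Y q)) _ p :=
    ((hx1.const_mul (-2:ℝ)).mul hY'.snd.fst).add hY'.snd.snd
  rw [h.fderiv]
  simp [ContinuousLinearMap.comp_apply]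
  ring

/-- the almost contact structure `(φ, ξ, η)` on `𝒬³_α` is normal:
`N_φ(X,Y) + (X(η(Y)) − Y(η(X)) − η([X,Y]))·ξ = 0` on `{x > 0}` for all smooth
vector fields `X, Y`. -/
theorem normality_of_Q (X Y : R3 → R3)
    (hX : ContDiffOn ℝ (⊤ : ℕ∞) X U3) (hY : ContDiffOn ℝ (⊤ : ℕ∞) Y U3) :
    ∀ p ∈ U3,
      nijenhuisQ X Y p +
        (fderiv ℝ (fun q => etaQ q (Y q)) p (X p) - fderiv ℝ (fun q => etaQ q (X q)) p (Y p)
          - etaQ p (bracket X Y p)) • xiQ = 0 := by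
  
  intro p hp
  have hUo : IsOpen U3 := isOpen_lt continuous_const continuous_fst
  have hXp : DifferentiableAt ℝ X p := (hX.contDiffAt (hUo.mem_nhds hp)).differentiableAt (by simp)
  have hYp : DifferentiableAt ℝ Y p := (hY.contDiffAt (hUo.mem_nhds hp)).differentiableAt (by simp)
  obtain ⟨LX, hLX, hLXw⟩ := hasFDerivAt_phiVF X p hXp
  obtain ⟨LY, hLY, hLYw⟩ := hasFDerivAt_phiVF Y p hYp
  rw [fderiv_etaVF Y p hYp, fderiv_etaVF X p hXp]
  simp only [nijenhuisQ, bracket, phiVF, phiQ, etaQ, xiQ]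
  rw [hLX.fderiv, hLY.fderiv]
  simp only [hLXw, hLYw]
  simp only [Prod.fst_sub, Prod.snd_sub, Prod.smul_mk, smul_eq_mul, Prod.mk_add_mk,
    Prod.mk_sub_mk, Prod.mk_eq_zero]
  refine ⟨by ring, by ring, by ring⟩
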